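/- arXiv:2403.04628 — 4 statements merged into one kernel-verified Lean document; each statement's English description precedes it below -/
import Mathlib

section
/- Let u : [0,∞) × ℝ → ℝ be smooth in a neighborhood of a point (t₀, ξ₀) with t₀ > 0, and suppose u satisfies u_t = u_xx + f'(u)u_x near (t₀,ξ₀) for a smooth f with f'(0) = 0, together with u(t₀,ξ₀) = 0, u_x(t₀,ξ₀) = 0, and u_xx(t₀,ξ₀) ≠ 0. Then u_t(t₀,ξ₀) = u_xx(t₀,ξ₀) ≠ 0, and there exist δ > 0 and two continuous functions ξ₁, ξ₂ : (t₀-δ, t₀) → ℝ with ξ₁(t) < ξ₂(t), u(t, ξᵢ(t)) = 0, and ξ_{1,2}(t) - ξ₀ = ±√(2(t₀-t)) + O(t₀-t) as t → t₀⁻; moreover for t ∈ (t₀, t₀+δ), u(t,·) has no zeros in a neighborhood of ξ₀. -/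
open Filter Asymptotics Set Function

private lemma framework (u : ℝ → ℝ → ℝ) (t₀ ξ₀ : ℝ)
    (hu : ContDiffAt ℝ (⊤ : ℕ∞) (Function.uncurry u) (t₀, ξ₀)) :
    ∃ (U : Set (ℝ × ℝ)) (Dt Dx Dxx : ℝ × ℝ → ℝ), IsOpen U ∧ (t₀, ξ₀) ∈ U ∧
      ContinuousOn (Function.uncurry u) U ∧
      (∀ p ∈ U, HasDerivAt (u p.1) (Dx p) p.2) ∧
      (∀ p ∈ U, HasDerivAt (fun s => u s p.2) (Dt p) p.1) ∧
      (∀ p ∈ U, HasDerivAt (fun x => Dx (p.1, x)) (Dxx p) p.2) ∧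
      (∀ p ∈ U, deriv (deriv (u p.1)) p.2 = Dxx p) ∧
      ContDiffAt ℝ 1 Dt (t₀, ξ₀) ∧ ContDiffAt ℝ 1 Dxx (t₀, ξ₀) := by
  obtain ⟨U₀, hU₀o, hmem₀, hF₀⟩ := hu.contDiffOn' (m := 3) (le_trans (by norm_num) (WithTop.coe_le_coe.2 (le_top : (3 : ℕ∞) ≤ ⊤))) (fun h => by exact absurd h (by decide))
  rw [insert_eq_of_mem (mem_univ _), univ_inter] at hF₀
  set F := Function.uncurry u with hFdef
  set U := U₀ with hUdef
  have hUo : IsOpen U := hU₀o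
  have hmem : (t₀, ξ₀) ∈ U := hmem₀
  have hF : ContDiffOn ℝ 3 F U := hF₀
  have hG : ContDiffOn ℝ 2 (fderiv ℝ F) U := hF.fderiv_of_isOpen hUo (by norm_num)
  set Dx : ℝ × ℝ → ℝ := fun p => fderiv ℝ F p (0, 1) with hDxdef
  set Dt : ℝ × ℝ → ℝ := fun p => fderiv ℝ F p (1, 0) with hDtdef
  have hDxC : ContDiffOn ℝ 2 Dx U := hG.clm_apply contDiffOn_const
  have hDtC : ContDiffOn ℝ 2 Dt U := hG.clm_apply contDiffOn_const
  have hG2 : ContDiffOn ℝ 1 (fderiv ℝ Dx) U := hDxC.fderiv_of_isOpen hUo (by norm_num)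
  set Dxx : ℝ × ℝ → ℝ := fun p => fderiv ℝ Dx p (0, 1) with hDxxdef
  have hDxxC : ContDiffOn ℝ 1 Dxx U := hG2.clm_apply contDiffOn_const
  -- basic HasFDerivAt facts
  have hFd : ∀ p ∈ U, HasFDerivAt F (fderiv ℝ F p) p := fun p hp =>
    ((hF.differentiableOn (by simp)).differentiableAt (hUo.mem_nhds hp)).hasFDerivAt
  have hDxd : ∀ p ∈ U, HasFDerivAt Dx (fderiv ℝ Dx p) p := fun p hp =>
    ((hDxC.differentiableOn (by simp)).differentiableAt (hUo.mem_nhds hp)).hasFDerivAt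
  have curveX : ∀ (t x : ℝ), HasDerivAt (fun y : ℝ => ((t, y) : ℝ × ℝ)) ((0 : ℝ), (1 : ℝ)) x :=
    fun t x => (hasDerivAt_const x t).prodMk (hasDerivAt_id x)
  have curveT : ∀ (t x : ℝ), HasDerivAt (fun s : ℝ => ((s, x) : ℝ × ℝ)) ((1 : ℝ), (0 : ℝ)) t :=
    fun t x => (hasDerivAt_id t).prodMk (hasDerivAt_const t x)
  have hx' : ∀ p ∈ U, HasDerivAt (u p.1) (Dx p) p.2 := by
    intro p hp
    have := (hFd p hp).comp_hasDerivAt p.2 (curveX p.1 p.2)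
    exact this
  have ht' : ∀ p ∈ U, HasDerivAt (fun s => u s p.2) (Dt p) p.1 := by
    intro p hp
    have := (hFd p hp).comp_hasDerivAt p.1 (curveT p.1 p.2)
    exact this
  have hxx' : ∀ p ∈ U, HasDerivAt (fun x => Dx (p.1, x)) (Dxx p) p.2 := by
    intro p hp
    have := (hDxd p hp).comp_hasDerivAt p.2 (curveX p.1 p.2)
    exact this
  refine ⟨U, Dt, Dx, Dxx, hUo, hmem, hF.continuousOn, hx', ht', hxx', ?_, 
    (hDtC.contDiffAt (hUo.mem_nhds hmem)).of_le (by simp),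
    (hDxxC.contDiffAt (hUo.mem_nhds hmem)).of_le (by simp)⟩
  intro p hp
  have hev : deriv (u p.1) =ᶠ[nhds p.2] (fun x => Dx (p.1, x)) := by
    have hsl : IsOpen {y : ℝ | (p.1, y) ∈ U} := hUo.preimage (Continuous.prodMk_right p.1)
    filter_upwards [hsl.mem_nhds (show p.2 ∈ _ from hp)] with y hy
    exact (hx' (p.1, y) hy).deriv
  rw [hev.deriv_eq]
  exact (hxx' p hp).deriv

private lemma lip_bound (g : ℝ × ℝ → ℝ) (p₀ : ℝ × ℝ) (hg : ContDiffAt ℝ 1 g p₀) :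
    ∃ L > (0:ℝ), ∀ᶠ p : ℝ × ℝ in nhds p₀, |g p - g p₀| ≤ L * (|p.1 - p₀.1| + |p.2 - p₀.2|) := by
  obtain ⟨K, t, ht, hK⟩ := hg.exists_lipschitzOnWith
  refine ⟨K + 1, by positivity, ?_⟩
  filter_upwards [ht, eventually_mem_nhds_iff.mpr ht] with p hp _
  have := hK.dist_le_mul p hp p₀ (mem_of_mem_nhds ht)
  rw [Real.dist_eq] at this
  have hd : dist p p₀ ≤ |p.1 - p₀.1| + |p.2 - p₀.2| := by
    rw [Prod.dist_eq, Real.dist_eq, Real.dist_eq]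
    exact max_le (le_add_of_nonneg_right (abs_nonneg _)) (le_add_of_nonneg_left (abs_nonneg _))
  calc |g p - g p₀| ≤ K * dist p p₀ := this
    _ ≤ (K + 1) * (|p.1 - p₀.1| + |p.2 - p₀.2|) := by
        apply mul_le_mul _ hd dist_nonneg (by positivity)
        simp
  
private lemma sconv_between {f : ℝ → ℝ} {s : Set ℝ} {p q x : ℝ} (hf : StrictConvexOn ℝ s f)
    (hp : p ∈ s) (hq : q ∈ s) (h₁ : p < x) (h₂ : x < q) (hfp : f p ≤ 0) (hfq : f q ≤ 0) :
    f x < 0 := by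
  have hpq : p < q := h₁.trans h₂
  set lam := (q - x) / (q - p) with hlam
  have hlam0 : 0 < lam := div_pos (by linarith) (by linarith)
  have hlam1 : 0 < 1 - lam := by
    have : lam < 1 := (div_lt_one (by linarith)).2 (by linarith)
    linarith
  have hx : lam • p + (1 - lam) • q = x := by
    rw [smul_eq_mul, smul_eq_mul, hlam]
    have hqp : q - p ≠ 0 := by linarith
    field_simp
    ring
  have := hf.2 hp hq hpq.ne hlam0 hlam1 (by ring)
  rw [hx] at this
  have : f x < lam * f p + (1 - lam) * f q := this
  nlinarith

private lemma abs_sub_le_of_mem_uIcc {a b c : ℝ} (h : c ∈ uIcc a b) : |c - a| ≤ |b - a| := by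
  rcases le_total a b with hab | hab
  · rw [uIcc_of_le hab] at h
    rw [abs_of_nonneg (by linarith [h.1]), abs_of_nonneg (by linarith)]
    linarith [h.2]
  · rw [uIcc_of_ge hab] at h
    rw [abs_of_nonpos (by linarith [h.2]), abs_of_nonpos (by linarith)]
    linarith [h.1]

private lemma asym_arith (a L s r δ y : ℝ) (ha : 0 < a) (hL : 0 < L)
    (hLr : L * r ≤ a / 8) (hLδ : L * δ ≤ a / 8) (hs : 0 < s) (hsδ : s < δ) (hδ1 : δ ≤ 1)
    (hy0 : 0 < y) (hyr : y < r)
    (hk : |a / 2 * y ^ 2 - a * s| ≤ L * (s + y) * s + L * y ^ 2 * y) :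
    a * |y - Real.sqrt (2 * s)| ≤ 22 * L * s := by
  have hs1 : s ≤ 1 := by linarith
  have hsqrt_pos : 0 < Real.sqrt s := Real.sqrt_pos.2 hs
  have hss : s ≤ Real.sqrt s := by
    have h4 : Real.sqrt (s ^ 2) ≤ Real.sqrt s := Real.sqrt_le_sqrt (by nlinarith)
    rwa [Real.sqrt_sq hs.le] at h4
  have hLs : L * s ≤ a / 8 := by nlinarith
  have hLy : L * y ≤ a / 8 := by nlinarith
  rw [abs_le] at hk
  have hcrude : y ^ 2 ≤ 4 * s := by nlinarith [hk.2]
  have hy2s : y ≤ 2 * Real.sqrt s := by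
    have h4 : Real.sqrt (y ^ 2) ≤ Real.sqrt (4 * s) := Real.sqrt_le_sqrt hcrude
    rw [Real.sqrt_sq hy0.le] at h4
    have h5 : Real.sqrt (4 * s) = 2 * Real.sqrt s := by
      rw [show (4:ℝ) * s = 2 ^ 2 * s by ring, Real.sqrt_mul (by positivity),
        Real.sqrt_sq (by norm_num)]
    linarith [h4, h5.le]
  have hA : L * (s * s) ≤ L * (s * Real.sqrt s) := by
    apply mul_le_mul_of_nonneg_left _ hL.le
    exact mul_le_mul_of_nonneg_left hss hs.le
  have hC : L * (s * y) ≤ L * (2 * (s * Real.sqrt s)) := by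
    apply mul_le_mul_of_nonneg_left _ hL.le
    nlinarith
  have hB : L * (y ^ 2 * y) ≤ L * (8 * (s * Real.sqrt s)) := by
    apply mul_le_mul_of_nonneg_left _ hL.le
    have h6 : y ^ 3 ≤ (2 * Real.sqrt s) ^ 3 := pow_le_pow_left₀ hy0.le hy2s 3
    have hsq : Real.sqrt s ^ 2 = s := Real.sq_sqrt hs.le
    nlinarith [h6]
  have habs3 : a / 2 * |y ^ 2 - 2 * s| ≤ 11 * L * (s * Real.sqrt s) := by
    have he : a / 2 * |y ^ 2 - 2 * s| = |a / 2 * y ^ 2 - a * s| := by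
      rw [show a / 2 * y ^ 2 - a * s = a / 2 * (y ^ 2 - 2 * s) by ring, abs_mul,
        abs_of_pos (by positivity : (0:ℝ) < a / 2)]
    rw [he, abs_le]
    constructor
    · nlinarith [hk.1]
    · nlinarith [hk.2]
  set q := Real.sqrt (2 * s) with hqdef
  have hq2 : q ^ 2 = 2 * s := Real.sq_sqrt (by positivity)
  have hq_ge : Real.sqrt s ≤ q := Real.sqrt_le_sqrt (by linarith)
  have hq_nn : 0 ≤ q := Real.sqrt_nonneg _
  clear_value q
  have hfac : |y - q| * (y + q) = |y ^ 2 - 2 * s| := by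
    rw [← abs_of_pos (show (0:ℝ) < y + q by positivity), ← abs_mul]
    congr 1
    linear_combination -hq2
  have hstep : a / 2 * (|y - q| * Real.sqrt s) ≤ 11 * L * (s * Real.sqrt s) := by
    refine le_trans ?_ habs3
    apply mul_le_mul_of_nonneg_left _ (by positivity : (0:ℝ) ≤ a / 2)
    rw [← hfac]
    apply mul_le_mul_of_nonneg_left _ (abs_nonneg _)
    linarith
  have hstep' : (a / 2 * |y - q|) * Real.sqrt s ≤ (11 * L * s) * Real.sqrt s := by
    calc (a / 2 * |y - q|) * Real.sqrt s = a / 2 * (|y - q| * Real.sqrt s) := by ring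
      _ ≤ 11 * L * (s * Real.sqrt s) := hstep
      _ = (11 * L * s) * Real.sqrt s := by ring
  have := le_of_mul_le_mul_right hstep' hsqrt_pos
  linarith

private lemma nozero_arith (a L s w δ r v : ℝ) (ha : 0 < a) (hL : 0 < L)
    (hLr : L * r ≤ a / 8) (hLδ : L * δ ≤ a / 8) (hs1 : 0 < s) (hs2 : s < δ)
    (hw0 : 0 ≤ w) (hwr : w ≤ r)
    (hk : -(L * (s + w) * s + L * w ^ 2 * w) ≤ v - (a * s + a / 2 * w ^ 2)) : 0 < v := by
  have hLs : L * s ≤ a / 8 := by nlinarith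
  have hLw : L * w ≤ a / 8 := by nlinarith
  have e1 : L * (s + w) * s ≤ a / 4 * s := by nlinarith
  have e2 : L * w ^ 2 * w ≤ a / 8 * w ^ 2 := by nlinarith
  nlinarith [sq_nonneg w]

set_option maxHeartbeats 1600000 in
private lemma fold_main (u : ℝ → ℝ → ℝ) (t₀ ξ₀ a : ℝ) (ha : 0 < a)
    (hu : ContDiffAt ℝ (⊤ : ℕ∞) (Function.uncurry u) (t₀, ξ₀))
    (h0 : u t₀ ξ₀ = 0) (h1 : deriv (u t₀) ξ₀ = 0)
    (h2 : deriv (deriv (u t₀)) ξ₀ = a)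
    (ht : deriv (fun s => u s ξ₀) t₀ = a) :
    ∃ δ > (0:ℝ), ∃ ξ₁ ξ₂ : ℝ → ℝ,
      ContinuousOn ξ₁ (Ioo (t₀ - δ) t₀) ∧ ContinuousOn ξ₂ (Ioo (t₀ - δ) t₀) ∧
      (∀ t ∈ Ioo (t₀ - δ) t₀,
        ξ₁ t < ξ₂ t ∧ u t (ξ₁ t) = 0 ∧ u t (ξ₂ t) = 0) ∧
      (fun t => ξ₁ t - ξ₀ + Real.sqrt (2 * (t₀ - t))) =O[nhdsWithin t₀ (Iio t₀)]
        (fun t => t₀ - t) ∧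
      (fun t => ξ₂ t - ξ₀ - Real.sqrt (2 * (t₀ - t))) =O[nhdsWithin t₀ (Iio t₀)]
        (fun t => t₀ - t) ∧
      ∃ ε > (0:ℝ), ∀ t ∈ Ioo t₀ (t₀ + δ), ∀ x : ℝ, |x - ξ₀| < ε → u t x ≠ 0 := by
  obtain ⟨U, Dt, Dx, Dxx, hUo, hmem, hcont, hdx, hdt, hdxx, hdd, hCt, hCxx⟩ :=
    framework u t₀ ξ₀ hu
  have hDx0 : Dx (t₀, ξ₀) = 0 := by
    have := (hdx (t₀, ξ₀) hmem).deriv; rw [h1] at this; exact this.symm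
  have hDt0 : Dt (t₀, ξ₀) = a := by
    have := (hdt (t₀, ξ₀) hmem).deriv; rw [ht] at this; exact this.symm
  have hDxx0 : Dxx (t₀, ξ₀) = a := by rw [← hdd _ hmem]; exact h2
  obtain ⟨L₁, hL₁, hb₁⟩ := lip_bound Dt _ hCt
  obtain ⟨L₂, hL₂, hb₂⟩ := lip_bound Dxx _ hCxx
  set L := L₁ + L₂ with hLdef
  have hL : 0 < L := by positivity
  have hev : ∀ᶠ p : ℝ × ℝ in nhds (t₀, ξ₀), p ∈ U ∧
      |Dt p - a| ≤ L * (|p.1 - t₀| + |p.2 - ξ₀|) ∧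
      |Dxx p - a| ≤ L * (|p.1 - t₀| + |p.2 - ξ₀|) := by
    filter_upwards [hUo.mem_nhds hmem, hb₁, hb₂] with p h₁' h₂' h₃'
    rw [hDt0] at h₂'; rw [hDxx0] at h₃'
    have hnn : (0:ℝ) ≤ |p.1 - t₀| + |p.2 - ξ₀| := by positivity
    refine ⟨h₁', h₂'.trans ?_, h₃'.trans ?_⟩ <;>
      · apply mul_le_mul_of_nonneg_right _ hnn
        simp [hLdef]; positivity
  obtain ⟨ε₀, hε₀, hεP⟩ := Metric.eventually_nhds_iff.mp hev
  set r : ℝ := min (ε₀ / 2) (a / (8 * L)) with hrdef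
  have hr : 0 < r := by positivity
  set δ : ℝ := min (min (ε₀ / 2) (a / (8 * L))) (min (r ^ 2 / 12) 1) with hδdef
  have hδ : 0 < δ := by positivity
  have hLr : L * r ≤ a / 8 := by
    have : r ≤ a / (8 * L) := min_le_right _ _
    calc L * r ≤ L * (a / (8 * L)) := by nlinarith
      _ = a / 8 := by field_simp
  have hLδ : L * δ ≤ a / 8 := by
    have : δ ≤ a / (8 * L) := le_trans (min_le_left _ _) (min_le_right _ _)
    calc L * δ ≤ L * (a / (8 * L)) := by nlinarith
      _ = a / 8 := by field_simp
  have hδr : δ ≤ r ^ 2 / 12 := le_trans (min_le_right _ _) (min_le_left _ _)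
  have hδ1 : δ ≤ 1 := le_trans (min_le_right _ _) (min_le_right _ _)
  have hbox : ∀ t x : ℝ, |t - t₀| ≤ δ → |x - ξ₀| ≤ r → (t, x) ∈ U ∧
      |Dt (t, x) - a| ≤ L * (|t - t₀| + |x - ξ₀|) ∧
      |Dxx (t, x) - a| ≤ L * (|t - t₀| + |x - ξ₀|) := by
    intro t x h₁' h₂'
    apply hεP
    rw [Prod.dist_eq, Real.dist_eq, Real.dist_eq]
    have hδε : δ ≤ ε₀ / 2 := le_trans (min_le_left _ _) (min_le_left _ _)
    have hrε : r ≤ ε₀ / 2 := min_le_left _ _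
    apply max_lt <;> [skip; skip] <;> linarith
  clear_value L r δ
  -- E1: time direction MVT
  have hE1 : ∀ t x : ℝ, |t - t₀| ≤ δ → |x - ξ₀| ≤ r →
      |u t x - u t₀ x - a * (t - t₀)| ≤ L * (|t - t₀| + |x - ξ₀|) * |t - t₀| := by
    intro t x hT hX
    have hder : ∀ τ ∈ uIcc t₀ t,
        HasDerivWithinAt (fun τ => u τ x - a * τ) (Dt (τ, x) - a) (uIcc t₀ t) τ := by
      intro τ hτ
      have hτb : |τ - t₀| ≤ δ := le_trans (abs_sub_le_of_mem_uIcc hτ) hT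
      have hmul : HasDerivAt (fun τ : ℝ => a * τ) a τ := by
        simpa using (hasDerivAt_id τ).const_mul a
      exact ((hdt (τ, x) (hbox τ x hτb hX).1).sub hmul).hasDerivWithinAt
    have hbd : ∀ τ ∈ uIcc t₀ t, ‖Dt (τ, x) - a‖ ≤ L * (|t - t₀| + |x - ξ₀|) := by
      intro τ hτ
      have hτb : |τ - t₀| ≤ δ := le_trans (abs_sub_le_of_mem_uIcc hτ) hT
      refine le_trans (hbox τ x hτb hX).2.1 ?_
      have := abs_sub_le_of_mem_uIcc hτ
      nlinarith [abs_nonneg (x - ξ₀), abs_nonneg (τ - t₀)]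
    have := (convex_uIcc t₀ t).norm_image_sub_le_of_norm_hasDerivWithin_le hder hbd
      (left_mem_uIcc) (right_mem_uIcc)
    rw [Real.norm_eq_abs, Real.norm_eq_abs] at this
    calc |u t x - u t₀ x - a * (t - t₀)| = |u t x - a * t - (u t₀ x - a * t₀)| := by ring_nf
      _ ≤ L * (|t - t₀| + |x - ξ₀|) * |t - t₀| := this
  -- E2 step 1
  have hDx1 : ∀ x : ℝ, |x - ξ₀| ≤ r → |Dx (t₀, x) - a * (x - ξ₀)| ≤ L * |x - ξ₀| ^ 2 := by
    intro x hX
    have hder : ∀ y ∈ uIcc ξ₀ x,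
        HasDerivWithinAt (fun y => Dx (t₀, y) - a * (y - ξ₀)) (Dxx (t₀, y) - a) (uIcc ξ₀ x) y := by
      intro y hy
      have hyb : |y - ξ₀| ≤ r := le_trans (abs_sub_le_of_mem_uIcc hy) hX
      have hmul : HasDerivAt (fun y : ℝ => a * (y - ξ₀)) a y := by
        simpa using ((hasDerivAt_id y).sub_const ξ₀).const_mul a
      exact ((hdxx (t₀, y) (hbox t₀ y (by simp [le_of_lt hδ]) hyb).1).sub hmul).hasDerivWithinAt
    have hbd : ∀ y ∈ uIcc ξ₀ x, ‖Dxx (t₀, y) - a‖ ≤ L * |x - ξ₀| := by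
      intro y hy
      have hyb : |y - ξ₀| ≤ r := le_trans (abs_sub_le_of_mem_uIcc hy) hX
      refine le_trans (hbox t₀ y (by simp [le_of_lt hδ]) hyb).2.2 ?_
      have := abs_sub_le_of_mem_uIcc hy
      simp only [sub_self, abs_zero, zero_add]
      nlinarith
    have h'' := (convex_uIcc ξ₀ x).norm_image_sub_le_of_norm_hasDerivWithin_le hder hbd
      (left_mem_uIcc) (right_mem_uIcc)
    rw [Real.norm_eq_abs, Real.norm_eq_abs, hDx0] at h''
    simp only [sub_self, mul_zero, zero_sub, neg_zero, sub_zero] at h''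
    calc |Dx (t₀, x) - a * (x - ξ₀)| ≤ L * |x - ξ₀| * |x - ξ₀| := h''
      _ = L * |x - ξ₀| ^ 2 := by ring
  -- E2
  have hE2 : ∀ x : ℝ, |x - ξ₀| ≤ r →
      |u t₀ x - a / 2 * (x - ξ₀) ^ 2| ≤ L * |x - ξ₀| ^ 2 * |x - ξ₀| := by
    intro x hX
    have hder : ∀ y ∈ uIcc ξ₀ x,
        HasDerivWithinAt (fun y => u t₀ y - a / 2 * (y - ξ₀) ^ 2)
          (Dx (t₀, y) - a * (y - ξ₀)) (uIcc ξ₀ x) y := by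
      intro y hy
      have hyb : |y - ξ₀| ≤ r := le_trans (abs_sub_le_of_mem_uIcc hy) hX
      have hsq : HasDerivAt (fun y : ℝ => a / 2 * (y - ξ₀) ^ 2) (a * (y - ξ₀)) y := by
        have := (((hasDerivAt_id y).sub_const ξ₀).pow 2).const_mul (a / 2)
        simp only [id, Pi.pow_apply] at this
        refine this.congr_deriv ?_
        simp; ring
      exact ((hdx (t₀, y) (hbox t₀ y (by simp [le_of_lt hδ]) hyb).1).sub hsq).hasDerivWithinAt
    have hbd : ∀ y ∈ uIcc ξ₀ x, ‖Dx (t₀, y) - a * (y - ξ₀)‖ ≤ L * |x - ξ₀| ^ 2 := by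
      intro y hy
      have hyb : |y - ξ₀| ≤ r := le_trans (abs_sub_le_of_mem_uIcc hy) hX
      rw [Real.norm_eq_abs]
      refine le_trans (hDx1 y hyb) ?_
      have h' := abs_sub_le_of_mem_uIcc hy
      have h'' : |y - ξ₀| ^ 2 ≤ |x - ξ₀| ^ 2 := pow_le_pow_left₀ (abs_nonneg _) h' 2
      nlinarith
    have h'' := (convex_uIcc ξ₀ x).norm_image_sub_le_of_norm_hasDerivWithin_le hder hbd
      (left_mem_uIcc) (right_mem_uIcc)
    rw [Real.norm_eq_abs, Real.norm_eq_abs] at h''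
    have e0 : u t₀ ξ₀ - a / 2 * (ξ₀ - ξ₀) ^ 2 = 0 := by rw [h0]; ring
    rw [e0, sub_zero] at h''
    exact h''
  -- key estimate
  have hkey : ∀ t x : ℝ, |t - t₀| ≤ δ → |x - ξ₀| ≤ r →
      |u t x - (a * (t - t₀) + a / 2 * (x - ξ₀) ^ 2)| ≤
        L * (|t - t₀| + |x - ξ₀|) * |t - t₀| + L * |x - ξ₀| ^ 2 * |x - ξ₀| := by
    intro t x hT hX
    have := abs_add_le (u t x - u t₀ x - a * (t - t₀)) (u t₀ x - a / 2 * (x - ξ₀) ^ 2)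
    calc |u t x - (a * (t - t₀) + a / 2 * (x - ξ₀) ^ 2)|
        = |(u t x - u t₀ x - a * (t - t₀)) + (u t₀ x - a / 2 * (x - ξ₀) ^ 2)| := by ring_nf
      _ ≤ |u t x - u t₀ x - a * (t - t₀)| + |u t₀ x - a / 2 * (x - ξ₀) ^ 2| := this
      _ ≤ _ := add_le_add (hE1 t x hT hX) (hE2 x hX)
  -- membership of Icc in box coordinates
  have hIccmem : ∀ x : ℝ, x ∈ Icc (ξ₀ - r) (ξ₀ + r) → |x - ξ₀| ≤ r := by
    intro x hx; rw [abs_le]; constructor <;> [linarith [hx.1]; linarith [hx.2]]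
  -- continuity of slices
  have hslice : ∀ t : ℝ, |t - t₀| ≤ δ → ContinuousOn (u t) (Icc (ξ₀ - r) (ξ₀ + r)) := by
    intro t hT
    have : ContinuousOn (fun x => (Function.uncurry u) (t, x)) (Icc (ξ₀ - r) (ξ₀ + r)) := by
      apply hcont.comp (Continuous.continuousOn (by fun_prop))
      intro x hx
      exact (hbox t x hT (hIccmem x hx)).1
    exact this
  have hcat : ∀ t x : ℝ, |t - t₀| ≤ δ → |x - ξ₀| ≤ r → ContinuousAt (fun s => u s x) t := by
    intro t x hT hX
    have h1' : ContinuousAt (Function.uncurry u) (t, x) :=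
      hcont.continuousAt (hUo.mem_nhds (hbox t x hT hX).1)
    have h2' : ContinuousAt (fun s : ℝ => ((s, x) : ℝ × ℝ)) t :=
      (continuous_id.prodMk continuous_const).continuousAt
    exact Filter.Tendsto.comp h1' h2'
  -- strict convexity of slices
  have hconv : ∀ t : ℝ, |t - t₀| ≤ δ → StrictConvexOn ℝ (Icc (ξ₀ - r) (ξ₀ + r)) (u t) := by
    intro t hT
    apply strictConvexOn_of_deriv2_pos (convex_Icc _ _) (hslice t hT)
    intro x hx
    rw [interior_Icc] at hx
    have hX : |x - ξ₀| ≤ r := hIccmem x ⟨hx.1.le, hx.2.le⟩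
    have hmm : (t, x) ∈ U := (hbox t x hT hX).1
    have h2' : (deriv^[2] (u t)) x = Dxx (t, x) := by
      rw [show deriv^[2] (u t) = deriv (deriv (u t)) from rfl]
      exact hdd (t, x) hmm
    rw [h2']
    have hbb := (hbox t x hT hX).2.2
    rw [abs_le] at hbb
    have habs : |t - t₀| + |x - ξ₀| ≤ δ + r := add_le_add hT hX
    have h3 : L * (|t - t₀| + |x - ξ₀|) ≤ L * (δ + r) :=
      mul_le_mul_of_nonneg_left habs hL.le
    have h4 : L * (δ + r) ≤ a / 4 := by rw [mul_add]; linarith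
    linarith [hbb.1, hbb.2]
  -- signs for t < t₀
  have neg_center : ∀ t ∈ Ioo (t₀ - δ) t₀, u t ξ₀ < 0 := by
    intro t htm
    have hs1 : 0 < t₀ - t := by linarith [htm.2]
    have hs2 : t₀ - t < δ := by linarith [htm.1]
    have hT : |t - t₀| ≤ δ := by rw [abs_le]; constructor <;> linarith
    have hk := hkey t ξ₀ hT (by simp [le_of_lt hr])
    simp only [sub_self, abs_zero] at hk
    rw [abs_le] at hk
    have hTe : |t - t₀| = t₀ - t := by rw [abs_of_nonpos (by linarith)]; ring
    rw [hTe] at hk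
    have hLs : L * (t₀ - t) ≤ a / 8 := by nlinarith
    have h5 : L * (t₀ - t) * (t₀ - t) ≤ a / 8 * (t₀ - t) :=
      mul_le_mul_of_nonneg_right hLs hs1.le
    nlinarith [hk.2, h5]
  have pos_edge : ∀ t ∈ Ioo (t₀ - δ) t₀, ∀ x : ℝ, |x - ξ₀| = r → 0 < u t x := by
    intro t htm x hxr
    have hs1 : 0 < t₀ - t := by linarith [htm.2]
    have hs2 : t₀ - t < δ := by linarith [htm.1]
    have hT : |t - t₀| ≤ δ := by rw [abs_le]; constructor <;> linarith
    have hk := hkey t x hT (le_of_eq hxr)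
    rw [hxr, abs_le] at hk
    have hTe : |t - t₀| = t₀ - t := by rw [abs_of_nonpos (by linarith)]; ring
    rw [hTe] at hk
    have hx2 : (x - ξ₀) ^ 2 = r ^ 2 := by
      rw [← sq_abs, hxr]
    rw [hx2] at hk
    -- u t x ≥ a(t-t₀) + a/2 r² - L(s+r)s - Lr³ > 0
    nlinarith [hk.1, mul_pos hL hs1, sq_nonneg r, sq_nonneg (t₀ - t), mul_pos hr hs1,
      mul_le_mul_of_nonneg_left hδr (le_of_lt ha)]
  -- existence of zeros
  have hEx2 : ∀ t ∈ Ioo (t₀ - δ) t₀, ∃ x ∈ Ioo ξ₀ (ξ₀ + r), u t x = 0 := by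
    intro t htm
    have hT : |t - t₀| ≤ δ := by
      rw [abs_le]; constructor <;> [linarith [htm.1]; linarith [htm.2]]
    have hsub : Icc ξ₀ (ξ₀ + r) ⊆ Icc (ξ₀ - r) (ξ₀ + r) := by
      apply Icc_subset_Icc <;> linarith
    have hivt := intermediate_value_Ioo (by linarith : ξ₀ ≤ ξ₀ + r)
      ((hslice t hT).mono hsub)
    have h0mem : (0:ℝ) ∈ Ioo (u t ξ₀) (u t (ξ₀ + r)) := by
      constructor
      · exact neg_center t htm
      · apply pos_edge t htm; rw [abs_of_nonneg (by linarith)]; ring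
    obtain ⟨x, hx, hux⟩ := hivt h0mem
    exact ⟨x, hx, hux⟩
  have hEx1 : ∀ t ∈ Ioo (t₀ - δ) t₀, ∃ x ∈ Ioo (ξ₀ - r) ξ₀, u t x = 0 := by
    intro t htm
    have hT : |t - t₀| ≤ δ := by
      rw [abs_le]; constructor <;> [linarith [htm.1]; linarith [htm.2]]
    have hsub : Icc (ξ₀ - r) ξ₀ ⊆ Icc (ξ₀ - r) (ξ₀ + r) := by
      apply Icc_subset_Icc <;> linarith
    have hivt := intermediate_value_Ioo' (by linarith : ξ₀ - r ≤ ξ₀)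
      ((hslice t hT).mono hsub)
    have h0mem : (0:ℝ) ∈ Ioo (u t ξ₀) (u t (ξ₀ - r)) := by
      constructor
      · exact neg_center t htm
      · apply pos_edge t htm; rw [abs_of_nonpos (by linarith)]; ring
    obtain ⟨x, hx, hux⟩ := hivt h0mem
    exact ⟨x, hx, hux⟩
  -- uniqueness of zeros on each side
  have uniq2 : ∀ t ∈ Ioo (t₀ - δ) t₀, ∀ x ∈ Ioo ξ₀ (ξ₀ + r), u t x = 0 →
      ∀ x' ∈ Ioo ξ₀ (ξ₀ + r), u t x' = 0 → x = x' := by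
    intro t htm x hx hux x' hx' hux'
    have hT : |t - t₀| ≤ δ := by
      rw [abs_le]; constructor <;> [linarith [htm.1]; linarith [htm.2]]
    have hξ₀ : ξ₀ ∈ Icc (ξ₀ - r) (ξ₀ + r) := by constructor <;> linarith
    by_contra hne
    rcases lt_or_gt_of_ne hne with hlt | hgt
    · have := sconv_between (hconv t hT) hξ₀
        (⟨by linarith [hx'.1], hx'.2.le⟩ : x' ∈ Icc (ξ₀ - r) (ξ₀ + r))
        hx.1 hlt (neg_center t htm).le hux'.le
      rw [hux] at this; exact lt_irrefl _ this
    · have := sconv_between (hconv t hT) hξ₀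
        (⟨by linarith [hx.1], hx.2.le⟩ : x ∈ Icc (ξ₀ - r) (ξ₀ + r))
        hx'.1 hgt (neg_center t htm).le hux.le
      rw [hux'] at this; exact lt_irrefl _ this
  have uniq1 : ∀ t ∈ Ioo (t₀ - δ) t₀, ∀ x ∈ Ioo (ξ₀ - r) ξ₀, u t x = 0 →
      ∀ x' ∈ Ioo (ξ₀ - r) ξ₀, u t x' = 0 → x = x' := by
    intro t htm x hx hux x' hx' hux'
    have hT : |t - t₀| ≤ δ := by
      rw [abs_le]; constructor <;> [linarith [htm.1]; linarith [htm.2]]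
    have hξ₀ : ξ₀ ∈ Icc (ξ₀ - r) (ξ₀ + r) := by constructor <;> linarith
    by_contra hne
    rcases lt_or_gt_of_ne hne with hlt | hgt
    · have := sconv_between (hconv t hT)
        (⟨hx.1.le, by linarith [hx.2]⟩ : x ∈ Icc (ξ₀ - r) (ξ₀ + r)) hξ₀
        hlt hx'.2 hux.le (neg_center t htm).le
      rw [hux'] at this; exact lt_irrefl _ this
    · have := sconv_between (hconv t hT)
        (⟨hx'.1.le, by linarith [hx'.2]⟩ : x' ∈ Icc (ξ₀ - r) (ξ₀ + r)) hξ₀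
        hgt hx.2 hux'.le (neg_center t htm).le
      rw [hux] at this; exact lt_irrefl _ this
  classical
  set Xi2 : ℝ → ℝ := fun t =>
    if h : ∃ x, x ∈ Ioo ξ₀ (ξ₀ + r) ∧ u t x = 0 then h.choose else ξ₀ with hXi2def
  set Xi1 : ℝ → ℝ := fun t =>
    if h : ∃ x, x ∈ Ioo (ξ₀ - r) ξ₀ ∧ u t x = 0 then h.choose else ξ₀ with hXi1def
  have hP2 : ∀ t ∈ Ioo (t₀ - δ) t₀, Xi2 t ∈ Ioo ξ₀ (ξ₀ + r) ∧ u t (Xi2 t) = 0 := by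
    intro t htm
    obtain ⟨x, hx, hux⟩ := hEx2 t htm
    have hex : ∃ x, x ∈ Ioo ξ₀ (ξ₀ + r) ∧ u t x = 0 := ⟨x, hx, hux⟩
    have : Xi2 t = hex.choose := by rw [hXi2def]; exact dif_pos hex
    rw [this]
    exact hex.choose_spec
  have hP1 : ∀ t ∈ Ioo (t₀ - δ) t₀, Xi1 t ∈ Ioo (ξ₀ - r) ξ₀ ∧ u t (Xi1 t) = 0 := by
    intro t htm
    obtain ⟨x, hx, hux⟩ := hEx1 t htm
    have hex : ∃ x, x ∈ Ioo (ξ₀ - r) ξ₀ ∧ u t x = 0 := ⟨x, hx, hux⟩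
    have : Xi1 t = hex.choose := by rw [hXi1def]; exact dif_pos hex
    rw [this]
    exact hex.choose_spec
  have hTofIoo : ∀ t ∈ Ioo (t₀ - δ) t₀, |t - t₀| ≤ δ := by
    intro t htm
    rw [abs_le]; constructor <;> [linarith [htm.1]; linarith [htm.2]]
  -- continuity of Xi2
  have cont2 : ContinuousOn Xi2 (Ioo (t₀ - δ) t₀) := by
    intro t htm
    apply ContinuousAt.continuousWithinAt
    rw [ContinuousAt, Metric.tendsto_nhds]
    intro ε' hε'
    obtain ⟨hmem2, hz2⟩ := hP2 t htm
    have hT : |t - t₀| ≤ δ := hTofIoo t htm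
    set η := min (ε' / 2) (min ((Xi2 t - ξ₀) / 2) ((ξ₀ + r - Xi2 t) / 2)) with hηdef
    have hη : 0 < η :=
      lt_min (by linarith) (lt_min (by linarith [hmem2.1]) (by linarith [hmem2.2]))
    have hη1 : η ≤ ε' / 2 := min_le_left _ _
    have hη2 : η ≤ (Xi2 t - ξ₀) / 2 := le_trans (min_le_right _ _) (min_le_left _ _)
    have hη3 : η ≤ (ξ₀ + r - Xi2 t) / 2 := le_trans (min_le_right _ _) (min_le_right _ _)
    have hmemIcc : ∀ y : ℝ, ξ₀ - r ≤ y → y ≤ ξ₀ + r → y ∈ Icc (ξ₀ - r) (ξ₀ + r) :=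
      fun y h₁' h₂' => ⟨h₁', h₂'⟩
    have hξ₀Icc : ξ₀ ∈ Icc (ξ₀ - r) (ξ₀ + r) := ⟨by linarith, by linarith⟩
    have hneg : u t (Xi2 t - η) < 0 := by
      apply sconv_between (hconv t hT) hξ₀Icc
        (hmemIcc (Xi2 t) (by linarith [hmem2.1]) (by linarith [hmem2.2]))
        (by linarith [hmem2.1]) (by linarith) (neg_center t htm).le hz2.le
    have hpos : 0 < u t (Xi2 t + η) := by
      by_contra hle
      push_neg at hle
      have := sconv_between (hconv t hT) hξ₀Icc
        (hmemIcc (Xi2 t + η) (by linarith [hmem2.1]) (by linarith)) hmem2.1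
        (by linarith) (neg_center t htm).le hle
      rw [hz2] at this
      exact lt_irrefl _ this
    have hXm : |Xi2 t - η - ξ₀| ≤ r := by
      rw [abs_le]; constructor <;> [linarith [hmem2.1]; linarith [hmem2.2]]
    have hXp : |Xi2 t + η - ξ₀| ≤ r := by
      rw [abs_le]; constructor <;> [linarith [hmem2.1]; linarith]
    have e1 : ∀ᶠ t' in nhds t, t' ∈ Ioo (t₀ - δ) t₀ := isOpen_Ioo.eventually_mem htm
    have e2 : ∀ᶠ t' in nhds t, u t' (Xi2 t - η) ∈ Iio (0:ℝ) :=
      (hcat t (Xi2 t - η) hT hXm).eventually_mem (isOpen_Iio.mem_nhds hneg)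
    have e3 : ∀ᶠ t' in nhds t, u t' (Xi2 t + η) ∈ Ioi (0:ℝ) :=
      (hcat t (Xi2 t + η) hT hXp).eventually_mem (isOpen_Ioi.mem_nhds hpos)
    filter_upwards [e1, e2, e3] with t' ht'm hn' hp'
    have hT' : |t' - t₀| ≤ δ := hTofIoo t' ht'm
    have hsub : Icc (Xi2 t - η) (Xi2 t + η) ⊆ Icc (ξ₀ - r) (ξ₀ + r) :=
      Icc_subset_Icc (by linarith [hmem2.1]) (by linarith)
    obtain ⟨z, hz, huz⟩ := intermediate_value_Ioo (by linarith : Xi2 t - η ≤ Xi2 t + η)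
      ((hslice t' hT').mono hsub) (⟨hn', hp'⟩ : (0:ℝ) ∈ Ioo _ _)
    have hzmem : z ∈ Ioo ξ₀ (ξ₀ + r) :=
      ⟨by linarith [hz.1, hmem2.1], by linarith [hz.2]⟩
    have hzz := uniq2 t' ht'm z hzmem huz (Xi2 t') (hP2 t' ht'm).1 (hP2 t' ht'm).2
    rw [Real.dist_eq, ← hzz]
    have : |z - Xi2 t| < η := abs_lt.2 ⟨by linarith [hz.1], by linarith [hz.2]⟩
    linarith [abs_nonneg (z - Xi2 t)]
  -- continuity of Xi1
  have cont1 : ContinuousOn Xi1 (Ioo (t₀ - δ) t₀) := by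
    intro t htm
    apply ContinuousAt.continuousWithinAt
    rw [ContinuousAt, Metric.tendsto_nhds]
    intro ε' hε'
    obtain ⟨hmem1, hz1⟩ := hP1 t htm
    have hT : |t - t₀| ≤ δ := hTofIoo t htm
    set η := min (ε' / 2) (min ((ξ₀ - Xi1 t) / 2) ((Xi1 t - (ξ₀ - r)) / 2)) with hηdef
    have hη : 0 < η :=
      lt_min (by linarith) (lt_min (by linarith [hmem1.2]) (by linarith [hmem1.1]))
    have hη1 : η ≤ ε' / 2 := min_le_left _ _
    have hη2 : η ≤ (ξ₀ - Xi1 t) / 2 := le_trans (min_le_right _ _) (min_le_left _ _)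
    have hη3 : η ≤ (Xi1 t - (ξ₀ - r)) / 2 := le_trans (min_le_right _ _) (min_le_right _ _)
    have hξ₀Icc : ξ₀ ∈ Icc (ξ₀ - r) (ξ₀ + r) := ⟨by linarith, by linarith⟩
    have hneg : u t (Xi1 t + η) < 0 := by
      apply sconv_between (hconv t hT)
        (⟨by linarith [hmem1.1], by linarith [hmem1.2]⟩ : Xi1 t ∈ Icc (ξ₀ - r) (ξ₀ + r))
        hξ₀Icc (by linarith) (by linarith [hmem1.2]) hz1.le (neg_center t htm).le
    have hpos : 0 < u t (Xi1 t - η) := by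
      by_contra hle
      push_neg at hle
      have := sconv_between (hconv t hT)
        (⟨by linarith [hmem1.1], by linarith [hmem1.2]⟩ : Xi1 t - η ∈ Icc (ξ₀ - r) (ξ₀ + r))
        hξ₀Icc (by linarith) hmem1.2 hle (neg_center t htm).le
      rw [hz1] at this
      exact lt_irrefl _ this
    have hXm : |Xi1 t - η - ξ₀| ≤ r := by
      rw [abs_le]; constructor <;> [linarith [hmem1.1]; linarith [hmem1.2]]
    have hXp : |Xi1 t + η - ξ₀| ≤ r := by
      rw [abs_le]; constructor <;> [linarith [hmem1.1]; linarith [hmem1.2]]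
    have e1 : ∀ᶠ t' in nhds t, t' ∈ Ioo (t₀ - δ) t₀ := isOpen_Ioo.eventually_mem htm
    have e2 : ∀ᶠ t' in nhds t, u t' (Xi1 t + η) ∈ Iio (0:ℝ) :=
      (hcat t (Xi1 t + η) hT hXp).eventually_mem (isOpen_Iio.mem_nhds hneg)
    have e3 : ∀ᶠ t' in nhds t, u t' (Xi1 t - η) ∈ Ioi (0:ℝ) :=
      (hcat t (Xi1 t - η) hT hXm).eventually_mem (isOpen_Ioi.mem_nhds hpos)
    filter_upwards [e1, e2, e3] with t' ht'm hn' hp'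
    have hT' : |t' - t₀| ≤ δ := hTofIoo t' ht'm
    have hsub : Icc (Xi1 t - η) (Xi1 t + η) ⊆ Icc (ξ₀ - r) (ξ₀ + r) :=
      Icc_subset_Icc (by linarith [hmem1.1]) (by linarith [hmem1.2])
    obtain ⟨z, hz, huz⟩ := intermediate_value_Ioo' (by linarith : Xi1 t - η ≤ Xi1 t + η)
      ((hslice t' hT').mono hsub) (⟨hn', hp'⟩ : (0:ℝ) ∈ Ioo _ _)
    have hzmem : z ∈ Ioo (ξ₀ - r) ξ₀ :=
      ⟨by linarith [hz.1], by linarith [hz.2, hmem1.2]⟩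
    have hzz := uniq1 t' ht'm z hzmem huz (Xi1 t') (hP1 t' ht'm).1 (hP1 t' ht'm).2
    rw [Real.dist_eq, ← hzz]
    have : |z - Xi1 t| < η := abs_lt.2 ⟨by linarith [hz.1], by linarith [hz.2]⟩
    linarith [abs_nonneg (z - Xi1 t)]
  -- asymptotic estimate (common part)
  have hasym : ∀ t ∈ Ioo (t₀ - δ) t₀, ∀ y : ℝ, 0 < y → y < r →
      |a * (t - t₀) + a / 2 * y ^ 2| ≤ L * ((t₀ - t) + y) * (t₀ - t) + L * y ^ 2 * y →
      a * |y - Real.sqrt (2 * (t₀ - t))| ≤ 22 * L * (t₀ - t) := by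
    intro t htm y hy0 hyr hk
    have hs : 0 < t₀ - t := by linarith [htm.2]
    have hsδ : t₀ - t < δ := by linarith [htm.1]
    have hk' : |a / 2 * y ^ 2 - a * (t₀ - t)| ≤
        L * ((t₀ - t) + y) * (t₀ - t) + L * y ^ 2 * y := by
      rw [show a / 2 * y ^ 2 - a * (t₀ - t) = a * (t - t₀) + a / 2 * y ^ 2 by ring]
      exact hk
    exact asym_arith a L (t₀ - t) r δ y ha hL hLr hLδ hs hsδ hδ1 hy0 hyr hk'
  -- no zeros for t > t₀
  have nozero : ∀ t ∈ Ioo t₀ (t₀ + δ), ∀ x : ℝ, |x - ξ₀| < r → u t x ≠ 0 := by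
    intro t htm x hxr
    have hs1 : 0 < t - t₀ := by linarith [htm.1]
    have hs2 : t - t₀ < δ := by linarith [htm.2]
    have hT : |t - t₀| ≤ δ := by rw [abs_le]; constructor <;> linarith
    have hk := hkey t x hT hxr.le
    have hTe : |t - t₀| = t - t₀ := abs_of_pos hs1
    rw [hTe] at hk
    set w := |x - ξ₀| with hwdef
    have hw0 : 0 ≤ w := abs_nonneg _
    have hx2 : (x - ξ₀) ^ 2 = w ^ 2 := (sq_abs _).symm
    rw [hx2, abs_le] at hk
    exact ne_of_gt (nozero_arith a L (t - t₀) w δ r (u t x) ha hL hLr hLδ hs1 hs2 hw0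
      hxr.le hk.1)
  -- assembly
  refine ⟨δ, hδ, Xi1, Xi2, cont1, cont2, ?_, ?_, ?_, r, hr, nozero⟩
  · intro t htm
    obtain ⟨hm1, hz1⟩ := hP1 t htm
    obtain ⟨hm2, hz2⟩ := hP2 t htm
    exact ⟨lt_trans hm1.2 hm2.1, hz1, hz2⟩
  · rw [isBigO_iff]
    refine ⟨22 * L / a, ?_⟩
    filter_upwards [Ioo_mem_nhdsLT_of_mem (⟨by linarith, le_refl t₀⟩ : t₀ ∈ Ioc (t₀ - δ) t₀)]
      with t htm
    obtain ⟨hm1, hz1⟩ := hP1 t htm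
    have hT : |t - t₀| ≤ δ := hTofIoo t htm
    set y := ξ₀ - Xi1 t with hydef
    have hy0 : 0 < y := by simp [hydef]; linarith [hm1.2]
    have hyr : y < r := by simp [hydef]; linarith [hm1.1]
    have hk := hkey t (Xi1 t) hT (by rw [abs_le]; constructor <;>
      [linarith [hm1.1]; linarith [hm1.2]])
    rw [hz1, zero_sub, abs_neg] at hk
    have hxe : |Xi1 t - ξ₀| = y := by
      rw [abs_of_neg (by linarith [hm1.2] : Xi1 t - ξ₀ < 0)]; simp [hydef]
    have hx2 : (Xi1 t - ξ₀) ^ 2 = y ^ 2 := by rw [← sq_abs, hxe]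
    have hTe : |t - t₀| = t₀ - t := by
      rw [abs_of_nonpos (by linarith [htm.2])]; ring
    rw [hxe, hx2, hTe] at hk
    have hbound := hasym t htm y hy0 hyr hk
    rw [Real.norm_eq_abs, Real.norm_eq_abs]
    have he1 : |Xi1 t - ξ₀ + Real.sqrt (2 * (t₀ - t))| = |y - Real.sqrt (2 * (t₀ - t))| := by
      rw [show Xi1 t - ξ₀ + Real.sqrt (2 * (t₀ - t)) = -(y - Real.sqrt (2 * (t₀ - t))) by
        simp [hydef]; ring, abs_neg]
    have he2 : |t₀ - t| = t₀ - t := abs_of_pos (by linarith [htm.2])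
    rw [he1, he2, div_mul_eq_mul_div, le_div_iff₀ ha]
    nlinarith [hbound]
  · rw [isBigO_iff]
    refine ⟨22 * L / a, ?_⟩
    filter_upwards [Ioo_mem_nhdsLT_of_mem (⟨by linarith, le_refl t₀⟩ : t₀ ∈ Ioc (t₀ - δ) t₀)]
      with t htm
    obtain ⟨hm2, hz2⟩ := hP2 t htm
    have hT : |t - t₀| ≤ δ := hTofIoo t htm
    set y := Xi2 t - ξ₀ with hydef
    have hy0 : 0 < y := by simp [hydef]; linarith [hm2.1]
    have hyr : y < r := by simp [hydef]; linarith [hm2.2]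
    have hk := hkey t (Xi2 t) hT (by rw [abs_le]; constructor <;>
      [linarith [hm2.1]; linarith [hm2.2]])
    rw [hz2, zero_sub, abs_neg] at hk
    have hxe : |Xi2 t - ξ₀| = y := abs_of_pos hy0
    have hx2 : (Xi2 t - ξ₀) ^ 2 = y ^ 2 := by rw [← sq_abs, hxe]
    have hTe : |t - t₀| = t₀ - t := by
      rw [abs_of_nonpos (by linarith [htm.2])]; ring
    rw [hxe, hx2, hTe] at hk
    have hbound := hasym t htm y hy0 hyr hk
    rw [Real.norm_eq_abs, Real.norm_eq_abs]
    have he2 : |t₀ - t| = t₀ - t := abs_of_pos (by linarith [htm.2])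
    rw [he2, div_mul_eq_mul_div, le_div_iff₀ ha]
    nlinarith [hbound]

/-- Fold bifurcation at a coalescence event of interfaces of a scalar viscous
conservation law `u_t = u_xx + f'(u) u_x` with smooth flux satisfying `f'(0) = 0`. -/
theorem stmt_2 (u : ℝ → ℝ → ℝ) (f : ℝ → ℝ) (t₀ ξ₀ : ℝ) (ht₀ : 0 < t₀)
    (hu : ContDiffAt ℝ (⊤ : ℕ∞) (Function.uncurry u) (t₀, ξ₀))
    (hf : ContDiff ℝ (⊤ : ℕ∞) f) (hf0 : deriv f 0 = 0)
    (hpde : ∀ᶠ p : ℝ × ℝ in nhds (t₀, ξ₀),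
      deriv (fun s => u s p.2) p.1 =
        deriv (deriv (u p.1)) p.2 + deriv f (u p.1 p.2) * deriv (u p.1) p.2)
    (h0 : u t₀ ξ₀ = 0)
    (h1 : deriv (u t₀) ξ₀ = 0)
    (h2 : deriv (deriv (u t₀)) ξ₀ ≠ 0) :
    deriv (fun s => u s ξ₀) t₀ = deriv (deriv (u t₀)) ξ₀ ∧
    ∃ δ > (0:ℝ), ∃ ξ₁ ξ₂ : ℝ → ℝ,
      ContinuousOn ξ₁ (Ioo (t₀ - δ) t₀) ∧ ContinuousOn ξ₂ (Ioo (t₀ - δ) t₀) ∧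
      (∀ t ∈ Ioo (t₀ - δ) t₀,
        ξ₁ t < ξ₂ t ∧ u t (ξ₁ t) = 0 ∧ u t (ξ₂ t) = 0) ∧
      (fun t => ξ₁ t - ξ₀ + Real.sqrt (2 * (t₀ - t))) =O[nhdsWithin t₀ (Iio t₀)]
        (fun t => t₀ - t) ∧
      (fun t => ξ₂ t - ξ₀ - Real.sqrt (2 * (t₀ - t))) =O[nhdsWithin t₀ (Iio t₀)]
        (fun t => t₀ - t) ∧
      ∃ ε > (0:ℝ), ∀ t ∈ Ioo t₀ (t₀ + δ), ∀ x : ℝ, |x - ξ₀| < ε → u t x ≠ 0 := by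
  have hA : deriv (fun s => u s ξ₀) t₀ = deriv (deriv (u t₀)) ξ₀ := by
    have hp := hpde.self_of_nhds
    simp only at hp
    rw [hp, h0, hf0, h1]; ring
  refine ⟨hA, ?_⟩
  rcases h2.lt_or_gt with hneg | hpos
  · -- negative second derivative: apply the main lemma to `-u`
    set A := deriv (deriv (u t₀)) ξ₀ with hAdef
    set v : ℝ → ℝ → ℝ := fun t x => -(u t x) with hvdef
    have hv : ContDiffAt ℝ (⊤ : ℕ∞) (Function.uncurry v) (t₀, ξ₀) := hu.neg
    have h0v : v t₀ ξ₀ = 0 := by simp [hvdef, h0]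
    have hd1 : ∀ t : ℝ, deriv (v t) = fun x => -(deriv (u t) x) := by
      intro t; funext x
      exact deriv.neg
    have h1v : deriv (v t₀) ξ₀ = 0 := by rw [hd1]; simp [h1]
    have h2v : deriv (deriv (v t₀)) ξ₀ = -A := by
      rw [hd1 t₀]
      rw [show (deriv fun x => -deriv (u t₀) x) ξ₀ = -deriv (deriv (u t₀)) ξ₀ from deriv.neg,
        ← hAdef]
    have htv : deriv (fun s => v s ξ₀) t₀ = -A := by
      have he : (fun s => v s ξ₀) = fun s => -(u s ξ₀) := rfl
      rw [he, show (deriv fun s => -u s ξ₀) t₀ = -deriv (fun s => u s ξ₀) t₀ from deriv.neg,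
        hA]
    obtain ⟨δ, hδ, ξ₁, ξ₂, c1, c2, hz, hO1, hO2, ε, hε, hnz⟩ :=
      fold_main v t₀ ξ₀ (-A) (by linarith) hv h0v h1v h2v htv
    refine ⟨δ, hδ, ξ₁, ξ₂, c1, c2, ?_, hO1, hO2, ε, hε, ?_⟩
    · intro t htm
      obtain ⟨hlt, e1, e2⟩ := hz t htm
      exact ⟨hlt, neg_eq_zero.mp e1, neg_eq_zero.mp e2⟩
    · intro t htm x hx hu0
      exact (hnz t htm x hx) (by simp [hvdef, hu0])
  · exact fold_main u t₀ ξ₀ _ hpos hu h0 h1 rfl hA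
end

section
/- Let χ : [0,∞) × ℝ → ℝ be smooth with cosh(x) + χ(t,x) > 0 for all t,x, and define u(t,x) = (sinh(x) + χ_x(t,x))/(cosh(x) + χ(t,x)). If χ satisfies χ_t = χ_xx - χ, then u satisfies the viscous Burgers' equation u_t = u_xx + 2 u u_x. -/
open scoped ContDiff

/-- The exact solution formula for the viscous Burgers' equation: if `χ` solves
`χ_t = χ_xx - χ` and `cosh(x) + χ(t,x) > 0`, then
`u = (sinh(x) + χ_x)/(cosh(x) + χ)` solves `u_t = u_xx + 2 u u_x`. -/
theorem stmt_7 (χ : ℝ → ℝ → ℝ)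
    (hχ : ∀ t x : ℝ, 0 ≤ t → ContDiffAt ℝ (⊤ : ℕ∞) (Function.uncurry χ) (t, x))
    (hpos : ∀ t x : ℝ, 0 ≤ t → 0 < Real.cosh x + χ t x)
    (hpde : ∀ t x : ℝ, 0 < t →
      deriv (fun s => χ s x) t = deriv (deriv (χ t)) x - χ t x)
    (u : ℝ → ℝ → ℝ)
    (hu : ∀ t x : ℝ, u t x = (Real.sinh x + deriv (χ t) x) / (Real.cosh x + χ t x)) :
    ∀ t x : ℝ, 0 < t →
      deriv (fun s => u s x) t =
        deriv (deriv (u t)) x + 2 * u t x * deriv (u t) x := by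
  intro t x ht
  set F := Function.uncurry χ with hFdef
  have hFd : ∀ s y : ℝ, 0 ≤ s → DifferentiableAt ℝ F (s, y) :=
    fun s y hs => (hχ s y hs).differentiableAt (by simp)
  -- partial derivative in `t` direction
  have keyt : ∀ s y : ℝ, 0 ≤ s →
      HasDerivAt (fun r => χ r y) (fderiv ℝ F (s, y) (1, 0)) s := by
    intro s y hs
    have hg : HasDerivAt (fun r : ℝ => (r, y)) ((1:ℝ), (0:ℝ)) s :=
      HasDerivAt.prodMk (hasDerivAt_id s) (hasDerivAt_const s y)
    simpa [hFdef, Function.comp_def] using (hFd s y hs).hasFDerivAt.comp_hasDerivAt s hg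
  -- partial derivative in `x` direction
  have keyx : ∀ s y : ℝ, 0 ≤ s →
      HasDerivAt (χ s) (fderiv ℝ F (s, y) (0, 1)) y := by
    intro s y hs
    have hg : HasDerivAt (fun r : ℝ => (s, r)) ((0:ℝ), (1:ℝ)) y :=
      HasDerivAt.prodMk (hasDerivAt_const y s) (hasDerivAt_id y)
    simpa [hFdef, Function.comp_def] using (hFd s y hs).hasFDerivAt.comp_hasDerivAt y hg
  -- smoothness of the slice `χ t`
  have hst : ContDiff ℝ ∞ (χ t) := by
    rw [contDiff_iff_contDiffAt]
    intro y
    have := ContDiffAt.comp (n := ∞) y ((hχ t y ht.le).of_le (by simp))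
      (ContDiffAt.prodMk (contDiffAt_const (c := t)) contDiffAt_id)
    simpa [Function.comp_def, hFdef] using this
  have hst1 : ContDiff ℝ ∞ (deriv (χ t)) := (contDiff_infty_iff_deriv.mp hst).2
  have hst2 : ContDiff ℝ ∞ (deriv (deriv (χ t))) := (contDiff_infty_iff_deriv.mp hst1).2
  have hone : (∞ : WithTop ℕ∞) ≠ 0 := by simp
  have hd0 : ∀ y : ℝ, HasDerivAt (χ t) (deriv (χ t) y) y :=
    fun y => (hst.differentiable hone y).hasDerivAt
  have hd1 : ∀ y : ℝ, HasDerivAt (deriv (χ t)) (deriv (deriv (χ t)) y) y :=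
    fun y => (hst1.differentiable hone y).hasDerivAt
  have hd2 : ∀ y : ℝ, HasDerivAt (deriv (deriv (χ t))) (deriv (deriv (deriv (χ t))) y) y :=
    fun y => (hst2.differentiable hone y).hasDerivAt
  have hpy : ∀ y : ℝ, 0 < Real.cosh y + χ t y := fun y => hpos t y ht.le
  have hut : u t = fun y => (Real.sinh y + deriv (χ t) y) / (Real.cosh y + χ t y) :=
    funext fun y => hu t y
  -- first spatial derivative of u, at every point y
  have hux : ∀ y : ℝ, HasDerivAt (u t)
      (((Real.cosh y + deriv (deriv (χ t)) y) * (Real.cosh y + χ t y)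
        - (Real.sinh y + deriv (χ t) y) * (Real.sinh y + deriv (χ t) y))
        / (Real.cosh y + χ t y) ^ 2) y := by
    intro y
    rw [hut]
    exact ((Real.hasDerivAt_sinh y).add (hd1 y)).div
      ((Real.hasDerivAt_cosh y).add (hd0 y)) (hpy y).ne'
  have hux_eq : deriv (u t) = fun y =>
      ((Real.cosh y + deriv (deriv (χ t)) y) * (Real.cosh y + χ t y)
        - (Real.sinh y + deriv (χ t) y) * (Real.sinh y + deriv (χ t) y))
        / (Real.cosh y + χ t y) ^ 2 :=
    funext fun y => (hux y).deriv
  -- second spatial derivative of u at x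
  have h2 : HasDerivAt (fun y =>
      ((Real.cosh y + deriv (deriv (χ t)) y) * (Real.cosh y + χ t y)
        - (Real.sinh y + deriv (χ t) y) * (Real.sinh y + deriv (χ t) y))
        / (Real.cosh y + χ t y) ^ 2)
      ((((Real.sinh x + deriv (deriv (deriv (χ t))) x) * (Real.cosh x + χ t x)
          + (Real.cosh x + deriv (deriv (χ t)) x) * (Real.sinh x + deriv (χ t) x)
        - ((Real.cosh x + deriv (deriv (χ t)) x) * (Real.sinh x + deriv (χ t) x)
          + (Real.sinh x + deriv (χ t) x) * (Real.cosh x + deriv (deriv (χ t)) x)))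
          * (Real.cosh x + χ t x) ^ 2
        - ((Real.cosh x + deriv (deriv (χ t)) x) * (Real.cosh x + χ t x)
          - (Real.sinh x + deriv (χ t) x) * (Real.sinh x + deriv (χ t) x))
          * (2 * (Real.cosh x + χ t x) ^ 1 * (Real.sinh x + deriv (χ t) x)))
        / ((Real.cosh x + χ t x) ^ 2) ^ 2) x := by
    have hnum : HasDerivAt (fun y =>
        (Real.cosh y + deriv (deriv (χ t)) y) * (Real.cosh y + χ t y)
          - (Real.sinh y + deriv (χ t) y) * (Real.sinh y + deriv (χ t) y))
        ((Real.sinh x + deriv (deriv (deriv (χ t))) x) * (Real.cosh x + χ t x)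
          + (Real.cosh x + deriv (deriv (χ t)) x) * (Real.sinh x + deriv (χ t) x)
        - ((Real.cosh x + deriv (deriv (χ t)) x) * (Real.sinh x + deriv (χ t) x)
          + (Real.sinh x + deriv (χ t) x) * (Real.cosh x + deriv (deriv (χ t)) x))) x :=
      (((Real.hasDerivAt_cosh x).add (hd2 x)).mul ((Real.hasDerivAt_cosh x).add (hd0 x))).sub
        (((Real.hasDerivAt_sinh x).add (hd1 x)).mul ((Real.hasDerivAt_sinh x).add (hd1 x)))
    have hden : HasDerivAt (fun y => (Real.cosh y + χ t y) ^ 2)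
        (2 * (Real.cosh x + χ t x) ^ 1 * (Real.sinh x + deriv (χ t) x)) x :=
      ((Real.hasDerivAt_cosh x).add (hd0 x)).pow 2
    exact hnum.div hden (pow_ne_zero 2 (hpy x).ne')
  -- mixed partial derivative: symmetry + PDE
  have hF' : ContDiffAt ℝ ∞ (fderiv ℝ F) (t, x) := (hχ t x ht.le).fderiv_right (by simp)
  have hM : HasFDerivAt (fderiv ℝ F) (fderiv ℝ (fderiv ℝ F) (t, x)) (t, x) :=
    (hF'.differentiableAt hone).hasFDerivAt
  have hmix1 : HasDerivAt (fun y => fderiv ℝ F (t, y) ((1:ℝ), (0:ℝ)))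
      (fderiv ℝ (fderiv ℝ F) (t, x) (0, 1) (1, 0)) x := by
    have hg : HasDerivAt (fun r : ℝ => (t, r)) ((0:ℝ), (1:ℝ)) x :=
      HasDerivAt.prodMk (hasDerivAt_const x t) (hasDerivAt_id x)
    have h1 := (ContinuousLinearMap.apply ℝ ℝ ((1:ℝ), (0:ℝ))).hasFDerivAt.comp (t, x) hM
    simpa [Function.comp_def] using h1.comp_hasDerivAt x hg
  have hmix2 : HasDerivAt (fun s => fderiv ℝ F (s, x) ((0:ℝ), (1:ℝ)))
      (fderiv ℝ (fderiv ℝ F) (t, x) (1, 0) (0, 1)) t := by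
    have hg : HasDerivAt (fun r : ℝ => (r, x)) ((1:ℝ), (0:ℝ)) t :=
      HasDerivAt.prodMk (hasDerivAt_id t) (hasDerivAt_const t x)
    have h1 := (ContinuousLinearMap.apply ℝ ℝ ((0:ℝ), (1:ℝ))).hasFDerivAt.comp (t, x) hM
    simpa [Function.comp_def] using h1.comp_hasDerivAt t hg
  have hsymm := (hχ t x ht.le).isSymmSndFDerivAt (by rw [minSmoothness_of_isRCLikeNormedField]; norm_cast)
  have hfun1 : (fun y => fderiv ℝ F (t, y) ((1:ℝ), (0:ℝ)))
      = fun y => deriv (deriv (χ t)) y - χ t y := by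
    funext y
    rw [← (keyt t y ht.le).deriv]
    exact hpde t y ht
  have hmixval : fderiv ℝ (fderiv ℝ F) (t, x) (0, 1) (1, 0)
      = deriv (deriv (deriv (χ t))) x - deriv (χ t) x := by
    have h := hmix1
    rw [hfun1] at h
    exact h.unique ((hd2 x).sub (hd0 x))
  have hmixval2 : fderiv ℝ (fderiv ℝ F) (t, x) (1, 0) (0, 1)
      = deriv (deriv (deriv (χ t))) x - deriv (χ t) x := by
    rw [hsymm (1, 0) (0, 1), hmixval]
  have hχt : fderiv ℝ F (t, x) ((1:ℝ), (0:ℝ)) = deriv (deriv (χ t)) x - χ t x := by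
    rw [← (keyt t x ht.le).deriv]
    exact hpde t x ht
  -- time derivative of u at (t, x)
  have hnum_t : HasDerivAt (fun s => Real.sinh x + deriv (χ s) x)
      (deriv (deriv (deriv (χ t))) x - deriv (χ t) x) t := by
    have heq : (fun s => Real.sinh x + fderiv ℝ F (s, x) ((0:ℝ), (1:ℝ)))
        =ᶠ[nhds t] fun s => Real.sinh x + deriv (χ s) x := by
      filter_upwards [eventually_gt_nhds ht] with s hs
      rw [(keyx s x hs.le).deriv]
    have h := (hasDerivAt_const t (Real.sinh x)).add hmix2
    rw [hmixval2] at h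
    rw [zero_add] at h
    exact h.congr_of_eventuallyEq heq.symm
  have hden_t : HasDerivAt (fun s => Real.cosh x + χ s x)
      (deriv (deriv (χ t)) x - χ t x) t := by
    have h := (hasDerivAt_const t (Real.cosh x)).add (keyt t x ht.le)
    rw [hχt, zero_add] at h
    exact h
  have hut' : HasDerivAt (fun s => u s x)
      (((deriv (deriv (deriv (χ t))) x - deriv (χ t) x) * (Real.cosh x + χ t x)
        - (Real.sinh x + deriv (χ t) x) * (deriv (deriv (χ t)) x - χ t x))
        / (Real.cosh x + χ t x) ^ 2) t := by
    have : (fun s => u s x) = fun s => (Real.sinh x + deriv (χ s) x) / (Real.cosh x + χ s x) :=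
      funext fun s => hu s x
    rw [this]
    exact hnum_t.div hden_t (hpy x).ne'
  have huxx : deriv (deriv (u t)) x =
      (((Real.sinh x + deriv (deriv (deriv (χ t))) x) * (Real.cosh x + χ t x)
          + (Real.cosh x + deriv (deriv (χ t)) x) * (Real.sinh x + deriv (χ t) x)
        - ((Real.cosh x + deriv (deriv (χ t)) x) * (Real.sinh x + deriv (χ t) x)
          + (Real.sinh x + deriv (χ t) x) * (Real.cosh x + deriv (deriv (χ t)) x)))
          * (Real.cosh x + χ t x) ^ 2
        - ((Real.cosh x + deriv (deriv (χ t)) x) * (Real.cosh x + χ t x)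
          - (Real.sinh x + deriv (χ t) x) * (Real.sinh x + deriv (χ t) x))
          * (2 * (Real.cosh x + χ t x) ^ 1 * (Real.sinh x + deriv (χ t) x)))
        / ((Real.cosh x + χ t x) ^ 2) ^ 2 := by
    rw [hux_eq]
    exact h2.deriv
  -- assemble
  rw [hut'.deriv, huxx, hu t x, (hux x).deriv]
  have hD : Real.cosh x + χ t x ≠ 0 := (hpy x).ne'
  field_simp
  ring
end

section
/- Let f̃ : ℝ → ℝ be continuously differentiable, and let ψ₋ < 0 < ψ₊ satisfy f̃(ψ₋) = f̃(ψ₊), f̃'(ψ±) ≠ 0, and f̃(z) < f̃(ψ±) for all z ∈ (ψ₋, ψ₊). Then the ODE ψ'(ξ) = f̃(ψ₊) - f̃(ψ(ξ)) with ψ(0) = 0 has a solution ψ : ℝ → ℝ that is strictly increasing, takes values in (ψ₋, ψ₊), and satisfies ψ(ξ) → ψ± as ξ → ±∞. -/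
open Set Filter Topology

/-!
Separation of variables: with `g = f ψp - f`, which is positive on `(ψm, ψp)` and vanishes at both
ends, the profile is the inverse of `F u = ∫₀ᵘ 1 / g`. Since `f` is Lipschitz, `g` vanishes at most
linearly at the endpoints, so `F` diverges logarithmically there and maps `(ψm, ψp)` increasingly
onto `ℝ`.
-/

theorem hasDerivAt_integral_of_continuousOn {E : Type*} [NormedAddCommGroup E] [NormedSpace ℝ E]
    [CompleteSpace E] {h : ℝ → E} {s : Set ℝ} {c u : ℝ} (hs : IsOpen s) [s.OrdConnected]
    (hh : ContinuousOn h s) (hc : c ∈ s) (hu : u ∈ s) :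
    HasDerivAt (fun u => ∫ t in c..u, h t) (h u) u :=
  intervalIntegral.integral_hasDerivAt_right
    ((hh.mono (Set.OrdConnected.uIcc_subset ‹_› hc hu)).intervalIntegrable)
    (hh.stronglyMeasurableAtFilter hs u hu) (hh.continuousAt (hs.mem_nhds hu))

/-- `G` grows at least like the antiderivative `-L⁻¹ log (b - u)` of `1 / (L (b - u))`. -/
theorem tendsto_nhdsLT_atTop_of_hasDerivAt_inv {G g : ℝ → ℝ} {c b L : ℝ} (hcb : c < b)
    (hG : ∀ u ∈ Ico c b, HasDerivAt G (g u)⁻¹ u) (hg_pos : ∀ u ∈ Ico c b, 0 < g u)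
    (hg_le : ∀ u ∈ Ico c b, g u ≤ L * (b - u)) :
    Tendsto G (𝓝[<] b) atTop := by
  have hc : c ∈ Ico c b := left_mem_Ico.2 hcb
  have hL : 0 < L := pos_of_mul_pos_left ((hg_pos c hc).trans_le (hg_le c hc)) (sub_pos.2 hcb).le
  set H : ℝ → ℝ := fun u => G u + L⁻¹ * Real.log (b - u)
  have hH : ∀ u ∈ Ico c b, HasDerivAt H ((g u)⁻¹ - (L * (b - u))⁻¹) u := by
    intro u hu
    have hlog := ((hasDerivAt_id u).const_sub b).log (sub_pos.2 hu.2).ne'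
    refine ((hG u hu).add (hlog.const_mul L⁻¹)).congr_deriv ?_
    simp only [id, mul_inv]
    ring
  have hH_mono : MonotoneOn H (Ico c b) := by
    refine monotoneOn_of_hasDerivWithinAt_nonneg (convex_Ico c b)
      (fun u hu => (hH u hu).continuousAt.continuousWithinAt)
      (fun u hu => (hH u (interior_subset hu)).hasDerivWithinAt) fun u hu => ?_
    have hu' := interior_subset hu
    exact sub_nonneg.2 (inv_anti₀ (hg_pos u hu') (hg_le u hu'))
  have hsub : Tendsto (fun u => b - u) (𝓝[<] b) (𝓝[>] 0) := by
    refine tendsto_nhdsWithin_iff.2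
      ⟨?_, eventually_nhdsWithin_of_forall fun u hu => sub_pos.2 (mem_Iio.1 hu)⟩
    simpa using ((continuous_sub_left b).tendsto b).mono_left nhdsWithin_le_nhds
  have hbound : Tendsto (fun u => H c - L⁻¹ * Real.log (b - u)) (𝓝[<] b) atTop :=
    tendsto_atTop_add_const_left _ _ <| tendsto_neg_atBot_atTop.comp
        ((Real.tendsto_log_nhdsGT_zero.comp hsub).const_mul_atBot (inv_pos.2 hL))
  refine tendsto_atTop_mono' _ ?_ hbound
  filter_upwards [Ico_mem_nhdsLT hcb] with u hu
  have := hH_mono hc hu hu.1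
  simp only [H] at this ⊢
  linarith

theorem tendsto_nhdsGT_atBot_of_hasDerivAt_inv {G g : ℝ → ℝ} {a c L : ℝ} (hac : a < c)
    (hG : ∀ u ∈ Ioc a c, HasDerivAt G (g u)⁻¹ u) (hg_pos : ∀ u ∈ Ioc a c, 0 < g u)
    (hg_le : ∀ u ∈ Ioc a c, g u ≤ L * (u - a)) :
    Tendsto G (𝓝[>] a) atBot := by
  have hmem : ∀ u ∈ Ico (-c) (-a), -u ∈ Ioc a c := fun u hu =>
    ⟨lt_neg_of_lt_neg hu.2, neg_le_of_neg_le hu.1⟩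
  have hreflected : Tendsto (fun u => -G (-u)) (𝓝[<] (-a)) atTop := by
    refine tendsto_nhdsLT_atTop_of_hasDerivAt_inv (g := fun u => g (-u)) (L := L)
      (neg_lt_neg hac) (fun u hu => ?_) (fun u hu => hg_pos _ (hmem u hu)) (fun u hu => ?_)
    · have := ((hG _ (hmem u hu)).comp u (hasDerivAt_neg u)).neg
      rwa [mul_neg_one, neg_neg] at this
    · rw [show -a - u = -u - a by ring]
      exact hg_le _ (hmem u hu)
  simpa [Function.comp_def] using
    tendsto_neg_atTop_atBot.comp (hreflected.comp (tendsto_neg_nhdsGT_neg (a := -a)))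

theorem surjOn_Ioo_of_tendsto {F : ℝ → ℝ} {a b : ℝ} (hab : a < b)
    (hF : ContinuousOn F (Ioo a b))
    (hbot : Tendsto F (𝓝[>] a) atBot) (htop : Tendsto F (𝓝[<] b) atTop) :
    SurjOn F (Ioo a b) univ := by
  intro y _
  obtain ⟨u, hu_lt, hu⟩ := ((hbot.eventually_lt_atBot y).and (Ioo_mem_nhdsGT hab)).exists
  obtain ⟨v, hv_gt, hv⟩ := ((htop.eventually_gt_atTop y).and (Ioo_mem_nhdsLT hab)).exists
  have huv : uIcc u v ⊆ Ioo a b := ordConnected_Ioo.uIcc_subset hu hv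
  obtain ⟨w, hw, rfl⟩ :=
    intermediate_value_uIcc (hF.mono huv) (mem_uIcc.2 (Or.inl ⟨hu_lt.le, hv_gt.le⟩))
  exact ⟨w, huv hw, rfl⟩

theorem exists_strictMono_inverse_of_hasDerivAt {F F' : ℝ → ℝ} {a b : ℝ} (hab : a < b)
    (hF : ∀ u ∈ Ioo a b, HasDerivAt F (F' u) u) (hF' : ∀ u ∈ Ioo a b, 0 < F' u)
    (hbot : Tendsto F (𝓝[>] a) atBot) (htop : Tendsto F (𝓝[<] b) atTop) :
    ∃ ψ : ℝ → ℝ, StrictMono ψ ∧ range ψ = Ioo a b ∧ (∀ u ∈ Ioo a b, ψ (F u) = u) ∧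
      ∀ ξ, HasDerivAt ψ (F' (ψ ξ))⁻¹ ξ := by
  have hcont : ContinuousOn F (Ioo a b) := fun u hu => (hF u hu).continuousAt.continuousWithinAt
  have hmono : StrictMonoOn F (Ioo a b) :=
    strictMonoOn_of_hasDerivWithinAt_pos (convex_Ioo a b) hcont
      (fun u hu => (hF u (interior_subset hu)).hasDerivWithinAt)
      (fun u hu => hF' u (interior_subset hu))
  have hbij : BijOn F (Ioo a b) univ :=
    ⟨mapsTo_univ _ _, hmono.injOn, surjOn_Ioo_of_tendsto hab hcont hbot htop⟩
  set ψ := Function.invFunOn F (Ioo a b)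
  obtain ⟨hψF, hFψ⟩ := hbij.invOn_invFunOn
  have hmaps (ξ : ℝ) : ψ ξ ∈ Ioo a b := hbij.surjOn.mapsTo_invFunOn (mem_univ ξ)
  have hψ_mono : StrictMono ψ := fun x y hxy =>
    (hmono.lt_iff_lt (hmaps x) (hmaps y)).1 (by rwa [hFψ (mem_univ x), hFψ (mem_univ y)])
  have hrange : range ψ = Ioo a b :=
    (range_subset_iff.2 hmaps).antisymm fun u hu => ⟨F u, hψF hu⟩
  refine ⟨ψ, hψ_mono, hrange, fun u hu => hψF hu, fun ξ => ?_⟩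
  have hψ_cont : ContinuousAt ψ ξ :=
    continuousAt_of_monotoneOn_of_image_mem_nhds (hψ_mono.monotone.monotoneOn univ) univ_mem
      (by rw [image_univ, hrange]; exact isOpen_Ioo.mem_nhds (hmaps ξ))
  exact HasDerivAt.of_local_left_inverse hψ_cont (hF _ (hmaps ξ)) (hF' _ (hmaps ξ)).ne'
    (Eventually.of_forall fun y => hFψ (mem_univ y))

theorem LipschitzOnWith.abs_sub_le_mul_sub {f : ℝ → ℝ} {K : NNReal} {s : Set ℝ}
    (hf : LipschitzOnWith K f s) {x y : ℝ} (hx : x ∈ s) (hy : y ∈ s) (hxy : x ≤ y) :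
    |f y - f x| ≤ K * (y - x) := by
  simpa [Real.dist_eq, abs_of_nonneg (sub_nonneg.2 hxy)] using hf.dist_le_mul y hy x hx

theorem stmt_13_general (f : ℝ → ℝ) (hf : ContDiff ℝ 1 f)
    (ψm ψp : ℝ) (hm : ψm < 0) (hp : 0 < ψp)
    (heq : f ψm = f ψp)
    (hlt : ∀ z ∈ Ioo ψm ψp, f z < f ψp) :
    ∃ ψ : ℝ → ℝ, ψ 0 = 0 ∧ StrictMono ψ ∧
      (∀ ξ : ℝ, ψ ξ ∈ Ioo ψm ψp) ∧
      (∀ ξ : ℝ, HasDerivAt ψ (f ψp - f (ψ ξ)) ξ) ∧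
      Tendsto ψ atTop (nhds ψp) ∧ Tendsto ψ atBot (nhds ψm) := by
  have hmp : ψm < ψp := hm.trans hp
  set g : ℝ → ℝ := fun t => f ψp - f t
  have hg_pos : ∀ t ∈ Ioo ψm ψp, 0 < g t := fun t ht => sub_pos.2 (hlt t ht)
  obtain ⟨K, hK⟩ := hf.locallyLipschitz.locallyLipschitzOn.exists_lipschitzOnWith_of_compact
    (isCompact_Icc (a := ψm) (b := ψp))
  set F : ℝ → ℝ := fun u => ∫ t in (0 : ℝ)..u, (g t)⁻¹
  have hF : ∀ u ∈ Ioo ψm ψp, HasDerivAt F (g u)⁻¹ u := fun u hu =>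
    hasDerivAt_integral_of_continuousOn isOpen_Ioo
      ((continuous_const.sub hf.continuous).continuousOn.inv₀ fun t ht => (hg_pos t ht).ne')
      ⟨hm, hp⟩ hu
  have hbot : Tendsto F (𝓝[>] ψm) atBot :=
    tendsto_nhdsGT_atBot_of_hasDerivAt_inv hm (fun u hu => hF u ⟨hu.1, hu.2.trans_lt hp⟩)
      (fun u hu => hg_pos u ⟨hu.1, hu.2.trans_lt hp⟩) fun u hu =>
        (le_abs_self _).trans <| (abs_sub_comm _ _).trans_le <|
          heq ▸ hK.abs_sub_le_mul_sub (left_mem_Icc.2 hmp.le) ⟨hu.1.le, hu.2.trans hp.le⟩ hu.1.le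
  have htop : Tendsto F (𝓝[<] ψp) atTop :=
    tendsto_nhdsLT_atTop_of_hasDerivAt_inv hp (fun u hu => hF u ⟨hm.trans_le hu.1, hu.2⟩)
      (fun u hu => hg_pos u ⟨hm.trans_le hu.1, hu.2⟩) fun u hu =>
        (le_abs_self _).trans <|
          hK.abs_sub_le_mul_sub ⟨hm.le.trans hu.1, hu.2.le⟩ (right_mem_Icc.2 hmp.le) hu.2.le
  obtain ⟨ψ, hψ_mono, hψ_range, hψF, hψ'⟩ := exists_strictMono_inverse_of_hasDerivAt hmp hF
    (fun u hu => inv_pos.2 (hg_pos u hu)) hbot htop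
  refine ⟨ψ, ?_, hψ_mono, fun ξ => hψ_range ▸ mem_range_self ξ, fun ξ => by simpa using hψ' ξ,
    tendsto_atTop_isLUB hψ_mono.monotone (hψ_range ▸ isLUB_Ioo hmp),
    tendsto_atBot_isGLB hψ_mono.monotone (hψ_range ▸ isGLB_Ioo hmp)⟩
  simpa [F] using hψF 0 ⟨hm, hp⟩

/-- Existence of a monotone heteroclinic traveling-wave profile for the scalar
profile equation `ψ' = f̃(ψ₊) - f̃(ψ)`. -/
theorem stmt_13 (f : ℝ → ℝ) (hf : ContDiff ℝ 1 f)
    (ψm ψp : ℝ) (hm : ψm < 0) (hp : 0 < ψp)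
    (heq : f ψm = f ψp)
    (hdm : deriv f ψm ≠ 0) (hdp : deriv f ψp ≠ 0)
    (hlt : ∀ z ∈ Ioo ψm ψp, f z < f ψp) :
    ∃ ψ : ℝ → ℝ, ψ 0 = 0 ∧ StrictMono ψ ∧
      (∀ ξ : ℝ, ψ ξ ∈ Ioo ψm ψp) ∧
      (∀ ξ : ℝ, HasDerivAt ψ (f ψp - f (ψ ξ)) ξ) ∧
      Tendsto ψ atTop (nhds ψp) ∧ Tendsto ψ atBot (nhds ψm) :=
  stmt_13_general f hf ψm ψp hm hp heq hlt
end

section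
/- Let u₀ : ℝ → ℝ be given by u₀(x) = (sinh(x) + χ₀'(x))/(cosh(x) + χ₀(x)) where χ₀ ∈ C^∞(ℝ) is even with χ₀(x) > 0 for all x, cosh + χ₀'' strictly increasing on [0,∞), and 1 + χ₀''(0) < 0. Then u₀ is odd, u₀'(0) = (1 + χ₀''(0))/(1 + χ₀(0)) < 0, and u₀ has exactly one zero x₀ in (0,∞), with u₀ < 0 on (0,x₀) and u₀ > 0 on (x₀,∞). -/
open Set

/-- The admissible class of initial data in the Cole–Hopf parametrization of the
viscous Burgers' equation: oddness, negative slope at the origin, and a unique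
positive zero with the prescribed sign configuration. -/
theorem stmt_18 (χ₀ : ℝ → ℝ) (hχ : ContDiff ℝ (⊤ : ℕ∞) χ₀)
    (heven : ∀ x : ℝ, χ₀ (-x) = χ₀ x)
    (hpos : ∀ x : ℝ, 0 < χ₀ x)
    (hmono : StrictMonoOn (fun x => Real.cosh x + deriv (deriv χ₀) x) (Ici (0:ℝ)))
    (hneg : 1 + deriv (deriv χ₀) 0 < 0)
    (u₀ : ℝ → ℝ)
    (hu : ∀ x : ℝ, u₀ x = (Real.sinh x + deriv χ₀ x) / (Real.cosh x + χ₀ x)) :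
    (∀ x : ℝ, u₀ (-x) = -u₀ x) ∧
    deriv u₀ 0 = (1 + deriv (deriv χ₀) 0) / (1 + χ₀ 0) ∧
    deriv u₀ 0 < 0 ∧
    ∃ x₀ : ℝ, 0 < x₀ ∧ u₀ x₀ = 0 ∧
      (∀ x ∈ Ioo 0 x₀, u₀ x < 0) ∧
      (∀ x ∈ Ioi x₀, 0 < u₀ x) ∧
      (∀ x : ℝ, 0 < x → u₀ x = 0 → x = x₀) := by
  have hχ1 : Differentiable ℝ χ₀ := hχ.differentiable (by simp)
  have hχd : ContDiff ℝ (↑(⊤:ℕ∞)) (deriv χ₀) := (hχ.of_le (by simp)).iterate_deriv 1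
  have hχ2 : Differentiable ℝ (deriv χ₀) := hχd.differentiable (by simp)
  have hχddC : Continuous (deriv (deriv χ₀)) :=
    ((hχ.of_le (by simp)).iterate_deriv 2).continuous
  -- odd derivative
  have hodd : ∀ x : ℝ, deriv χ₀ (-x) = - deriv χ₀ x := by
    intro x
    have h1 : (fun y : ℝ => χ₀ (-y)) = χ₀ := funext heven
    have h2 : deriv (fun y : ℝ => χ₀ (-y)) x = -deriv χ₀ (-x) := deriv_comp_neg χ₀ x
    rw [h1] at h2
    linarith
  have hd0 : deriv χ₀ 0 = 0 := by
    have := hodd 0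
    simp only [neg_zero] at this
    linarith
  -- abbreviations
  set G : ℝ → ℝ := fun x => Real.cosh x + deriv (deriv χ₀) x with hGdef
  set g : ℝ → ℝ := fun x => Real.sinh x + deriv χ₀ x with hgdef
  set D : ℝ → ℝ := fun x => Real.cosh x + χ₀ x with hDdef
  have hu' : ∀ x : ℝ, u₀ x = g x / D x := by intro x; rw [hu]
  have hDpos : ∀ x : ℝ, 0 < D x := fun x => add_pos (Real.cosh_pos x) (hpos x)
  have hg0 : g 0 = 0 := by simp [hgdef, hd0]
  have hasg : ∀ x : ℝ, HasDerivAt g (G x) x :=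
    fun x => (Real.hasDerivAt_sinh x).add (hχ2 x).hasDerivAt
  have hasD : ∀ x : ℝ, HasDerivAt D (g x) x :=
    fun x => (Real.hasDerivAt_cosh x).add (hχ1 x).hasDerivAt
  have hderivg : ∀ x : ℝ, deriv g x = G x := fun x => (hasg x).deriv
  have hderivD : ∀ x : ℝ, deriv D x = g x := fun x => (hasD x).deriv
  have hgC : Continuous g := Real.continuous_sinh.add hχ2.continuous
  have hGC : Continuous G := Real.continuous_cosh.add hχddC
  have hG0 : G 0 < 0 := by
    have : G 0 = 1 + deriv (deriv χ₀) 0 := by simp [hGdef]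
    linarith
  -- sign of u₀ equals sign of g
  have husign : ∀ x : ℝ, (u₀ x < 0 ↔ g x < 0) ∧ (0 < u₀ x ↔ 0 < g x) ∧ (u₀ x = 0 ↔ g x = 0) := by
    intro x
    rw [hu' x]
    constructor
    · constructor
      · intro h
        by_contra hcon; push_neg at hcon
        have : 0 ≤ g x / D x := div_nonneg hcon (hDpos x).le
        linarith
      · intro h; exact div_neg_of_neg_of_pos h (hDpos x)
    constructor
    · constructor
      · intro h
        by_contra hc; push_neg at hc
        have : g x / D x ≤ 0 := div_nonpos_of_nonpos_of_nonneg hc (hDpos x).le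
        linarith
      · intro h; exact div_pos h (hDpos x)
    · rw [div_eq_zero_iff]
      constructor
      · rintro (h | h)
        · exact h
        · exact absurd h (ne_of_gt (hDpos x))
      · intro h; exact Or.inl h
  -- part 1: oddness
  have part1 : ∀ x : ℝ, u₀ (-x) = -u₀ x := by
    intro x
    rw [hu' x, hu' (-x)]
    have hgodd : g (-x) = -g x := by
      simp only [hgdef]
      rw [Real.sinh_neg, hodd]
      ring
    have hDev : D (-x) = D x := by
      simp only [hDdef]
      rw [Real.cosh_neg, heven]
    rw [hgodd, hDev, neg_div]
  -- part 2: derivative at 0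
  have hue : u₀ = fun x => g x / D x := funext hu'
  have hD0 : D 0 = 1 + χ₀ 0 := by simp [hDdef]
  have hD0pos : (0:ℝ) < 1 + χ₀ 0 := by have := hpos 0; linarith
  have part2 : deriv u₀ 0 = (1 + deriv (deriv χ₀) 0) / (1 + χ₀ 0) := by
    rw [hue]
    have h := ((hasg 0).div (hasD 0) (ne_of_gt (hDpos 0))).deriv
    rw [show (fun x => g x / D x) = g / D from rfl, h, hg0, hD0]
    have hG0' : G 0 = 1 + deriv (deriv χ₀) 0 := by simp [hGdef]
    rw [hG0']
    field_simp
    ring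
  have part3 : deriv u₀ 0 < 0 := by
    rw [part2]
    exact div_neg_of_neg_of_pos hneg hD0pos
  -- existence of a point where G is positive
  have hGa : ∃ a : ℝ, 0 < a ∧ 0 < G a := by
    by_contra hc
    push_neg at hc
    have hGle : ∀ x ∈ Ioi (0:ℝ), deriv g x ≤ 0 := by
      intro x hx; rw [hderivg]; exact hc x hx
    have hgant : AntitoneOn g (Ici 0) := by
      apply antitoneOn_of_deriv_nonpos (convex_Ici 0) hgC.continuousOn
      · exact fun x hx => ((hasg x).differentiableAt).differentiableWithinAt
      · rw [interior_Ici]; exact hGle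
    have hgle : ∀ x : ℝ, 0 ≤ x → g x ≤ 0 := by
      intro x hx
      have := hgant (self_mem_Ici) hx hx
      rwa [hg0] at this
    have hDant : AntitoneOn D (Ici 0) := by
      apply antitoneOn_of_deriv_nonpos (convex_Ici 0) (Real.continuous_cosh.add hχ1.continuous).continuousOn
      · intro x hx; exact ((hasD x).differentiableAt).differentiableWithinAt
      · rw [interior_Ici]; intro x hx
        change deriv D x ≤ 0; rw [hderivD]; exact hgle x (le_of_lt hx)
    set X : ℝ := 2 * χ₀ 0 + 2 with hX
    have hX0 : (0:ℝ) ≤ X := by have := hpos 0; linarith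
    have hDle : D X ≤ D 0 := hDant self_mem_Ici hX0 hX0
    have hcosh : Real.exp X / 2 ≤ Real.cosh X := by
      rw [Real.cosh_eq]
      have := Real.exp_pos (-X); linarith
    have hexp : X + 1 ≤ Real.exp X := Real.add_one_le_exp X
    have h1 : D X = Real.cosh X + χ₀ X := rfl
    have h2 : D 0 = 1 + χ₀ 0 := hD0
    have := hpos X
    rw [h1, h2] at hDle
    nlinarith
  obtain ⟨a, ha0, hGapos⟩ := hGa
  -- zero of G
  have hc : ∃ c ∈ Ioo 0 a, G c = 0 := by
    have h := intermediate_value_Ioo (le_of_lt ha0) hGC.continuousOn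
    have : (0:ℝ) ∈ Ioo (G 0) (G a) := ⟨hG0, hGapos⟩
    obtain ⟨c, hc1, hc2⟩ := h this
    exact ⟨c, hc1, hc2⟩
  obtain ⟨c, hcmem, hGc⟩ := hc
  have hc0 : 0 < c := hcmem.1
  -- g strictly decreasing on [0,c]
  have hganti : StrictAntiOn g (Icc 0 c) := by
    apply strictAntiOn_of_deriv_neg (convex_Icc 0 c) hgC.continuousOn
    intro x hx
    rw [interior_Icc] at hx
    rw [hderivg]
    have := hmono (le_of_lt hx.1 : (0:ℝ) ≤ x) (le_of_lt hc0 : (0:ℝ) ≤ c) hx.2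
    rwa [hGc] at this
  -- g strictly increasing on [c,∞)
  have hgmono : StrictMonoOn g (Ici c) := by
    apply strictMonoOn_of_deriv_pos (convex_Ici c) hgC.continuousOn
    intro x hx
    rw [interior_Ici] at hx
    rw [hderivg]
    have := hmono (le_of_lt hc0 : (0:ℝ) ≤ c) (le_trans (le_of_lt hc0) (le_of_lt hx)) hx
    rwa [hGc] at this
  have hgc : g c < 0 := by
    have := hganti (left_mem_Icc.mpr (le_of_lt hc0)) (right_mem_Icc.mpr (le_of_lt hc0)) hc0
    rwa [hg0] at this
  -- g eventually positive
  have hb : ∃ b : ℝ, a < b ∧ 0 < g b := by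
    set q : ℝ := max 1 ((1 - g a) / G a) with hq
    refine ⟨a + q, by have : (1:ℝ) ≤ q := le_max_left _ _; linarith, ?_⟩
    have hkey0 : G a * ((a + q) - a) ≤ g (a + q) - g a := by
      apply Convex.mul_sub_le_image_sub_of_le_deriv (convex_Ici a) hgC.continuousOn
        (fun x _ => ((hasg x).differentiableAt).differentiableWithinAt)
      · intro x hx
        rw [interior_Ici] at hx
        rw [hderivg]
        exact (hmono ha0.le (le_trans ha0.le hx.le) hx).le
      · exact self_mem_Ici
      · exact mem_Ici.mpr (by have : (1:ℝ) ≤ q := le_max_left _ _; linarith)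
      · have : (1:ℝ) ≤ q := le_max_left _ _; linarith
    have hkey : G a * q ≤ g (a + q) - g a := by
      have heq : a + q - a = q := by ring
      rwa [heq] at hkey0
    have hq2 : (1 - g a) / G a ≤ q := le_max_right _ _
    have : 1 - g a ≤ G a * q := by
      rw [div_le_iff₀ hGapos] at hq2
      linarith [hq2]
    linarith
  obtain ⟨b, hab, hgb⟩ := hb
  have hcb : c < b := lt_trans hcmem.2 hab
  -- zero of g
  have hx₀ : ∃ x₀ ∈ Ioo c b, g x₀ = 0 := by
    have h := intermediate_value_Ioo (le_of_lt hcb) hgC.continuousOn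
    obtain ⟨x₀, h1, h2⟩ := h ⟨hgc, hgb⟩
    exact ⟨x₀, h1, h2⟩
  obtain ⟨x₀, hx₀mem, hgx₀⟩ := hx₀
  have hx₀pos : 0 < x₀ := lt_trans hc0 hx₀mem.1
  -- sign of g on (0, x₀)
  have hgneg : ∀ x : ℝ, 0 < x → x < x₀ → g x < 0 := by
    intro x hx hxx₀
    rcases le_or_gt x c with h | h
    · have := hganti (left_mem_Icc.mpr (le_of_lt hc0)) ⟨le_of_lt hx, h⟩ hx
      rwa [hg0] at this
    · have := hgmono (mem_Ici.mpr (le_of_lt h)) (mem_Ici.mpr (le_of_lt hx₀mem.1)) hxx₀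
      rwa [hgx₀] at this
  -- sign of g on (x₀, ∞)
  have hgpos : ∀ x : ℝ, x₀ < x → 0 < g x := by
    intro x hx
    have := hgmono (mem_Ici.mpr (le_of_lt hx₀mem.1)) (mem_Ici.mpr (le_trans (le_of_lt hx₀mem.1) (le_of_lt hx))) hx
    rwa [hgx₀] at this
  refine ⟨part1, part2, part3, x₀, hx₀pos, ?_, ?_, ?_, ?_⟩
  · exact (husign x₀).2.2.mpr hgx₀
  · intro x hx
    exact (husign x).1.mpr (hgneg x hx.1 hx.2)
  · intro x hx
    exact (husign x).2.1.mpr (hgpos x hx)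
  · intro x hx hux
    have hgx : g x = 0 := (husign x).2.2.mp hux
    rcases lt_trichotomy x x₀ with h | h | h
    · exact absurd hgx (ne_of_lt (hgneg x hx h))
    · exact h
    · exact absurd hgx (ne_of_gt (hgpos x h))
end
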